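/- arXiv:1411.6190 — 10 statements merged into one kernel-verified Lean document; each statement's English description precedes it below -/
import Mathlib

section
/- If a distribution F on ℝ is n-completely mixable with center μ₁ and k-completely mixable with center μ₂, then F is nk-completely mixable with center μ₁ and also nk-completely mixable with center μ₂. -/
open MeasureTheory

/-- `F` is `m`-completely mixable with center `μ`. -/
def IsCompleteMixable (m : ℕ) (F : Measure ℝ) (μ : ℝ) : Prop :=
  ∃ (Ω : Type) (_ : MeasurableSpace Ω) (P : Measure Ω) (_ : IsProbabilityMeasure P)
    (X : Fin m → Ω → ℝ), (∀ i, Measurable (X i)) ∧ (∀ i, P.map (X i) = F) ∧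
    (∀ᵐ ω ∂P, ∑ i, X i ω = m * μ)

/-
Take `r` independent copies of an `m`-complete mix of `F` with center `μ`: the resulting
`m * r` variables all have law `F`, and each copy contributes `m * μ` to their sum.
-/

namespace IsCompleteMixable

theorem of_fintype {ι Ω : Type} [Fintype ι] [MeasurableSpace Ω] {P : Measure Ω}
    [IsProbabilityMeasure P] {F : Measure ℝ} {μ : ℝ} {X : ι → Ω → ℝ}
    (hX : ∀ i, Measurable (X i)) (hlaw : ∀ i, P.map (X i) = F)
    (hsum : ∀ᵐ ω ∂P, ∑ i, X i ω = Fintype.card ι * μ) :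
    IsCompleteMixable (Fintype.card ι) F μ := by
  let e := Fintype.equivFin ι
  refine ⟨Ω, inferInstance, P, inferInstance, fun j => X (e.symm j),
    fun j => hX _, fun j => hlaw _, ?_⟩
  filter_upwards [hsum] with ω hω
  rwa [e.symm.sum_comp (fun i => X i ω)]

theorem mul_right {m : ℕ} {F : Measure ℝ} {μ : ℝ} (h : IsCompleteMixable m F μ) (r : ℕ) :
    IsCompleteMixable (m * r) F μ := by
  obtain ⟨Ω, _, P, _, X, hX, hlaw, hsum⟩ := h
  have hcopy :
      ∀ b : Fin r, ∀ᵐ ω ∂(Measure.pi fun _ : Fin r => P), ∑ a, X a (ω b) = m * μ :=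
    fun b => (measurePreserving_eval (fun _ => P) b).quasiMeasurePreserving.ae hsum
  suffices IsCompleteMixable (Fintype.card (Fin m × Fin r)) F μ by simpa using this
  refine of_fintype (P := Measure.pi fun _ : Fin r => P)
    (X := fun (p : Fin m × Fin r) ω => X p.1 (ω p.2))
    (fun p => (hX p.1).comp (measurable_pi_apply p.2))
    (fun p =>
      (MeasurePreserving.comp ⟨hX p.1, hlaw p.1⟩ (measurePreserving_eval _ p.2)).map_eq) ?_
  filter_upwards [ae_all_iff.2 hcopy] with ω hω
  simp only [Fintype.sum_prod_type_right, hω, Finset.sum_const, Finset.card_univ,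
    Fintype.card_prod, Fintype.card_fin, nsmul_eq_mul]
  push_cast
  ring

theorem mul_left {m : ℕ} {F : Measure ℝ} {μ : ℝ} (h : IsCompleteMixable m F μ) (r : ℕ) :
    IsCompleteMixable (r * m) F μ :=
  Nat.mul_comm m r ▸ h.mul_right r

end IsCompleteMixable

theorem cm_mul_general (n k : ℕ)
    (F : Measure ℝ) (μ₁ μ₂ : ℝ)
    (h1 : IsCompleteMixable n F μ₁) (h2 : IsCompleteMixable k F μ₂) :
    IsCompleteMixable (n * k) F μ₁ ∧ IsCompleteMixable (n * k) F μ₂ :=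
  ⟨h1.mul_right k, h2.mul_left n⟩

theorem cm_mul (n k : ℕ) (hn : 1 ≤ n) (hk : 1 ≤ k)
    (F : Measure ℝ) [IsProbabilityMeasure F] (μ₁ μ₂ : ℝ)
    (h1 : IsCompleteMixable n F μ₁) (h2 : IsCompleteMixable k F μ₂) :
    IsCompleteMixable (n * k) F μ₁ ∧ IsCompleteMixable (n * k) F μ₂ :=
  cm_mul_general n k F μ₁ μ₂ h1 h2
end

section
/- If F is an n-completely mixable distribution on ℝ with center μ and bounded essential support [a,b] (where a = sup{t : F(t)=0} and b = inf{t : F(t)=1}), then a + (b-a)/n ≤ μ ≤ b - (b-a)/n. -/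
/-!
Let `X₁ + ⋯ + Xₙ = n μ` a.s. with each `Xᵢ ~ F`. Every `Xᵢ` lies a.s. in `[a - ε, b + ε]`, while
`X₁` exceeds `b - ε` (resp. stays below `a + ε`) with positive probability. At a sample point of
that event where the sum equals `n μ`, the other `n - 1` summands are at least `a - ε` (resp. at
most `b + ε`), so `b + (n - 1) a - n ε ≤ n μ ≤ a + (n - 1) b + n ε`; let `ε → 0`.
-/

open MeasureTheory Set Filter Topology

lemma le_of_forall_pos_sub_mul_le {x y c : ℝ} (h : ∀ ε > 0, x - c * ε ≤ y) : x ≤ y := by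
  have hlim : Tendsto (fun ε => x - c * ε) (𝓝[>] 0) (𝓝 x) :=
    tendsto_nhdsWithin_of_tendsto_nhds <|
      (by fun_prop : Continuous fun ε : ℝ => x - c * ε).tendsto' 0 x (by simp)
  exact le_of_tendsto hlim (eventually_nhdsWithin_of_forall h)

lemma add_card_sub_one_mul_le_sum {ι : Type*} [Fintype ι] (x : ι → ℝ) (j : ι) {l : ℝ}
    (hl : ∀ i, l ≤ x i) : x j + (Fintype.card ι - 1) * l ≤ ∑ i, x i := by
  classical
  have hrest := Finset.card_nsmul_le_sum (Finset.univ.erase j) x l fun i _ => hl i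
  rw [Finset.card_erase_of_mem (Finset.mem_univ j), Finset.card_univ, nsmul_eq_mul,
    Nat.cast_pred (Fintype.card_pos_iff.2 ⟨j⟩)] at hrest
  rw [← Finset.add_sum_erase _ _ (Finset.mem_univ j)]
  linarith

section EssentialSupport

variable {F : Measure ℝ} {a b t : ℝ}

lemma measure_Iic_eq_zero_of_lt_isLUB (ha : IsLUB {t | F (Iic t) = 0} a) (ht : t < a) :
    F (Iic t) = 0 := by
  obtain ⟨s, hs, hts, -⟩ := ha.exists_between ht
  exact measure_mono_null (Iic_subset_Iic.2 hts.le) hs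

lemma ae_le_of_lt_isLUB (ha : IsLUB {t | F (Iic t) = 0} a) (ht : t < a) : ∀ᵐ x ∂F, t ≤ x :=
  ae_iff.2 <| measure_mono_null (fun _ hx => (not_le.1 hx).le)
    (measure_Iic_eq_zero_of_lt_isLUB ha ht)

lemma measure_Iic_ne_zero_of_isLUB_lt (ha : IsLUB {t | F (Iic t) = 0} a) (ht : a < t) :
    F (Iic t) ≠ 0 :=
  fun h => (ha.1 h).not_gt ht

variable [IsProbabilityMeasure F]

lemma measure_Iic_eq_one_of_isGLB_lt (hb : IsGLB {t | F (Iic t) = 1} b) (ht : b < t) :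
    F (Iic t) = 1 := by
  obtain ⟨s, hs, -, hst⟩ := hb.exists_between ht
  exact le_antisymm prob_le_one (hs ▸ measure_mono (Iic_subset_Iic.2 hst.le))

lemma ae_le_of_isGLB_lt (hb : IsGLB {t | F (Iic t) = 1} b) (ht : b < t) : ∀ᵐ x ∂F, x ≤ t := by
  have h := (prob_compl_eq_zero_iff measurableSet_Iic).2 <| measure_Iic_eq_one_of_isGLB_lt hb ht
  rw [compl_Iic] at h
  exact ae_iff.2 <| measure_mono_null (fun _ hx => not_le.1 hx) h

lemma measure_Ici_ne_zero_of_lt_isGLB (hb : IsGLB {t | F (Iic t) = 1} b) (ht : t < b) :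
    F (Ici t) ≠ 0 := by
  intro h
  have h1 : F (Iic t) = 1 := (prob_compl_eq_zero_iff measurableSet_Iic).1 <| by
    rw [compl_Iic]; exact measure_mono_null Ioi_subset_Ici_self h
  exact (hb.1 h1).not_gt ht

end EssentialSupport

section SumOfSamples

variable {Ω ι : Type*} [MeasurableSpace Ω] [Fintype ι] {P : Measure Ω} {X : ι → Ω → ℝ}
  {c l u : ℝ}

lemma add_mul_le_of_ae_sum_eq (j : ι) (hsum : ∀ᵐ ω ∂P, ∑ i, X i ω = c)
    (hl : ∀ i, ∀ᵐ ω ∂P, l ≤ X i ω) (hu : P {ω | u ≤ X j ω} ≠ 0) :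
    u + (Fintype.card ι - 1) * l ≤ c := by
  obtain ⟨ω, hωu, hωsum, hωl⟩ :=
    Measure.exists_mem_of_measure_ne_zero_of_ae hu (ae_restrict_of_ae (hsum.and (ae_all_iff.2 hl)))
  have hbound := add_card_sub_one_mul_le_sum (X · ω) j hωl
  rw [hωsum] at hbound
  linarith [show u ≤ X j ω from hωu]

lemma le_add_mul_of_ae_sum_eq (j : ι) (hsum : ∀ᵐ ω ∂P, ∑ i, X i ω = c)
    (hl : ∀ i, ∀ᵐ ω ∂P, X i ω ≤ l) (hu : P {ω | X j ω ≤ u} ≠ 0) :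
    c ≤ u + (Fintype.card ι - 1) * l := by
  have := add_mul_le_of_ae_sum_eq (X := fun i ω => -X i ω) (c := -c) (l := -l) (u := -u) j
    (hsum.mono fun ω h => by simp [h]) (fun i => (hl i).mono fun ω h => neg_le_neg h)
    (by simpa using hu)
  linarith

end SumOfSamples

theorem mean_condition
    (n : ℕ) (hn : 1 ≤ n) (F : Measure ℝ) [IsProbabilityMeasure F] (μ a b : ℝ)
    (hCM : ∃ (Ω : Type) (_ : MeasurableSpace Ω) (P : Measure Ω) (_ : IsProbabilityMeasure P)
      (X : Fin n → Ω → ℝ), (∀ i, Measurable (X i)) ∧ (∀ i, P.map (X i) = F) ∧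
      (∀ᵐ ω ∂P, ∑ i, X i ω = n * μ))
    (ha : IsLUB {t : ℝ | F (Set.Iic t) = 0} a)
    (hb : IsGLB {t : ℝ | F (Set.Iic t) = 1} b) :
    a + (b - a) / n ≤ μ ∧ μ ≤ b - (b - a) / n := by
  obtain ⟨Ω, _, P, _, X, hX, hXF, hsum⟩ := hCM
  let j : Fin n := ⟨0, hn⟩
  have hae {p : ℝ → Prop} (h : ∀ᵐ x ∂F, p x) (i : Fin n) : ∀ᵐ ω ∂P, p (X i ω) :=
    ae_of_ae_map (hX i).aemeasurable (by rwa [hXF i])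
  have hmeas {s : Set ℝ} (hs : MeasurableSet s) : P (X j ⁻¹' s) = F s := by
    rw [← hXF j, Measure.map_apply (hX j) hs]
  have hlow : b + (n - 1) * a ≤ n * μ := by
    refine le_of_forall_pos_sub_mul_le (c := n) fun ε hε => ?_
    have := add_mul_le_of_ae_sum_eq j hsum (hae (ae_le_of_lt_isLUB ha (sub_lt_self a hε)))
      ((hmeas measurableSet_Ici).trans_ne (measure_Ici_ne_zero_of_lt_isGLB hb (sub_lt_self b hε)))
    simp only [Fintype.card_fin] at this
    linarith
  have hhigh : n * μ ≤ a + (n - 1) * b := by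
    refine le_of_forall_pos_sub_mul_le (c := n) fun ε hε => ?_
    have := le_add_mul_of_ae_sum_eq j hsum (hae (ae_le_of_isGLB_lt hb (lt_add_of_pos_right b hε)))
      ((hmeas measurableSet_Iic).trans_ne
        (measure_Iic_ne_zero_of_isLUB_lt ha (lt_add_of_pos_right a hε)))
    simp only [Fintype.card_fin] at this
    linarith
  have hnpos : (0 : ℝ) < n := by exact_mod_cast hn
  constructor
  · rw [← le_sub_iff_add_le', div_le_iff₀ hnpos]; linarith
  · rw [le_sub_comm, div_le_iff₀ hnpos]; linarith
end

section
/- The uniform distribution on an interval [a,b] is n-completely mixable for every n ≥ 2, with center (a+b)/2. -/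
/-!
For `U` uniform on `[0, 1]`, the pair `U, 1 - U` sums to `1` and the triple `U`, `U + 1/2 mod 1`,
`1 - 2U mod 1` sums to `3/2` identically; the last two are again uniform, being piecewise affine
measure-preserving maps of `U`. Concatenating families with a common center gives every `n = 2k`
and `n = 2k + 3`, and the affine map `x ↦ (b - a) x + a` transports the mix to `[a, b]`.
-/

open MeasureTheory Set

structure IsCompleteMix {Ω : Type*} [MeasurableSpace Ω] (P : Measure Ω) (μ : Measure ℝ)
    (c : ℝ) {n : ℕ} (X : Fin n → Ω → ℝ) : Prop where
  measurePreserving : ∀ i, MeasurePreserving (X i) P μ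
  sum_eq : ∀ᵐ ω ∂P, ∑ i, X i ω = n * c

namespace IsCompleteMix

variable {Ω : Type*} [MeasurableSpace Ω] {P : Measure Ω} {μ : Measure ℝ} {c : ℝ} {k m : ℕ}

theorem append {X : Fin k → Ω → ℝ} {Y : Fin m → Ω → ℝ} (hX : IsCompleteMix P μ c X)
    (hY : IsCompleteMix P μ c Y) : IsCompleteMix P μ c (Fin.append X Y) where
  measurePreserving i := by
    refine Fin.addCases (fun i => ?_) (fun i => ?_) i
    · simpa only [Fin.append_left] using hX.measurePreserving i
    · simpa only [Fin.append_right] using hY.measurePreserving i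
  sum_eq := by
    filter_upwards [hX.sum_eq, hY.sum_eq] with ω hXω hYω
    rw [Fin.sum_univ_add]
    simp only [Fin.append_left, Fin.append_right, hXω, hYω]
    push_cast
    ring

theorem map_affine {X : Fin k → Ω → ℝ} (hX : IsCompleteMix P μ c X) (s t : ℝ) :
    IsCompleteMix P (μ.map (fun x => s * x + t)) (s * c + t) (fun i ω => s * X i ω + t) where
  measurePreserving i :=
    (MeasurePreserving.mk (f := fun x => s * x + t) (by fun_prop) rfl).comp
      (hX.measurePreserving i)
  sum_eq := by
    filter_upwards [hX.sum_eq] with ω hω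
    rw [Finset.sum_add_distrib, ← Finset.mul_sum, hω]
    simp only [Finset.sum_const, Finset.card_univ, Fintype.card_fin, nsmul_eq_mul]
    ring

end IsCompleteMix

theorem map_volume_affine {c : ℝ} (hc : c ≠ 0) (d : ℝ) :
    volume.map (fun x : ℝ => c * x + d) = ENNReal.ofReal |c⁻¹| • volume := by
  rw [show (fun x : ℝ => c * x + d) = (· + d) ∘ (c * ·) from rfl,
    ← Measure.map_map (measurable_add_const d) (measurable_const_mul c),
    Real.map_volume_mul_left hc, Measure.map_smul, map_add_right_eq_self]

theorem map_volume_restrict_affine {c : ℝ} (hc : c ≠ 0) (d : ℝ) {s t : Set ℝ}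
    (hst : (fun x : ℝ => c * x + d) ⁻¹' t = s) :
    (volume.restrict s).map (fun x : ℝ => c * x + d)
      = ENNReal.ofReal |c⁻¹| • volume.restrict t := by
  have hemb : MeasurableEmbedding (fun x : ℝ => c * x + d) :=
    ((Homeomorph.mulLeft₀ c hc).trans (Homeomorph.addRight d)).measurableEmbedding
  rw [← hst, ← hemb.restrict_map, map_volume_affine hc, Measure.restrict_smul]

theorem map_volume_restrict_of_eqOn_affine {f : ℝ → ℝ} {c : ℝ} (hc : c ≠ 0) (d : ℝ)
    {s t : Set ℝ} (hs : MeasurableSet s) (hf : EqOn f (fun x => c * x + d) s)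
    (hst : (fun x : ℝ => c * x + d) ⁻¹' t = s) :
    (volume.restrict s).map f = ENNReal.ofReal |c⁻¹| • volume.restrict t := by
  rw [Measure.map_congr ((ae_restrict_iff' hs).2 (Filter.Eventually.of_forall hf)),
    map_volume_restrict_affine hc d hst]

theorem volume_restrict_Icc_eq_add_Ioo {a b c : ℝ} (hab : a ≤ b) (hbc : b ≤ c) :
    volume.restrict (Icc a c) = volume.restrict (Ioo a b) + volume.restrict (Ioo b c) := by
  have hdisj : Disjoint (Ico a b) (Icc b c) :=
    disjoint_left.2 fun _ hx hx' => (not_le.2 hx.2) hx'.1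
  rw [← Ico_union_Icc_eq_Icc hab hbc, Measure.restrict_union hdisj measurableSet_Icc,
    Measure.restrict_congr_set Ioo_ae_eq_Ico.symm, Measure.restrict_congr_set Ioo_ae_eq_Icc.symm]

theorem measurePreserving_one_sub :
    MeasurePreserving (fun x : ℝ => 1 - x) (volume.restrict (Icc 0 1))
      (volume.restrict (Icc 0 1)) := by
  refine ⟨by fun_prop, ?_⟩
  have hpre : (fun x : ℝ => -1 * x + 1) ⁻¹' Icc 0 1 = Icc 0 1 := by
    ext x; simp only [mem_preimage, mem_Icc]
    constructor <;> rintro ⟨_, _⟩ <;> constructor <;> linarith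
  simpa [sub_eq_neg_add] using map_volume_restrict_affine (by norm_num) 1 hpre

noncomputable def shiftHalf (x : ℝ) : ℝ := if x < 1 / 2 then x + 1 / 2 else x - 1 / 2

noncomputable def reflectDouble (x : ℝ) : ℝ := if x < 1 / 2 then 1 - 2 * x else 2 - 2 * x

theorem add_shiftHalf_add_reflectDouble (x : ℝ) :
    x + shiftHalf x + reflectDouble x = 3 / 2 := by
  unfold shiftHalf reflectDouble
  split_ifs <;> ring

theorem measurePreserving_shiftHalf :
    MeasurePreserving shiftHalf (volume.restrict (Icc 0 1)) (volume.restrict (Icc 0 1)) := by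
  have hmeas : Measurable shiftHalf :=
    Measurable.ite measurableSet_Iio (by fun_prop) (by fun_prop)
  refine ⟨hmeas, ?_⟩
  have hlow :
      (volume.restrict (Ioo 0 (1 / 2))).map shiftHalf = volume.restrict (Ioo (1 / 2) 1) := by
    have hpre : (fun x : ℝ => 1 * x + 1 / 2) ⁻¹' Ioo (1 / 2) 1 = Ioo 0 (1 / 2) := by
      ext x; simp only [mem_preimage, mem_Ioo]
      constructor <;> rintro ⟨_, _⟩ <;> constructor <;> linarith
    simpa using map_volume_restrict_of_eqOn_affine one_ne_zero (1 / 2) measurableSet_Ioo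
      (fun x hx => by rw [shiftHalf, if_pos hx.2]; ring) hpre
  have hhigh :
      (volume.restrict (Ioo (1 / 2) 1)).map shiftHalf = volume.restrict (Ioo 0 (1 / 2)) := by
    have hpre : (fun x : ℝ => 1 * x + -(1 / 2)) ⁻¹' Ioo 0 (1 / 2) = Ioo (1 / 2) 1 := by
      ext x; simp only [mem_preimage, mem_Ioo]
      constructor <;> rintro ⟨_, _⟩ <;> constructor <;> linarith
    simpa using map_volume_restrict_of_eqOn_affine one_ne_zero (-(1 / 2)) measurableSet_Ioo
      (fun x hx => by rw [shiftHalf, if_neg (not_lt.2 hx.1.le)]; ring) hpre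
  have hsplit := volume_restrict_Icc_eq_add_Ioo (a := 0) (b := 1 / 2) (c := 1)
    (by norm_num) (by norm_num)
  conv_lhs => rw [hsplit]
  rw [Measure.map_add _ _ hmeas, hlow, hhigh, hsplit, add_comm]

theorem measurePreserving_reflectDouble :
    MeasurePreserving reflectDouble (volume.restrict (Icc 0 1)) (volume.restrict (Icc 0 1)) := by
  have hmeas : Measurable reflectDouble :=
    Measurable.ite measurableSet_Iio (by fun_prop) (by fun_prop)
  refine ⟨hmeas, ?_⟩
  have hlow : (volume.restrict (Ioo 0 (1 / 2))).map reflectDouble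
      = ENNReal.ofReal (1 / 2) • volume.restrict (Ioo 0 1) := by
    have hpre : (fun x : ℝ => -2 * x + 1) ⁻¹' Ioo 0 1 = Ioo 0 (1 / 2) := by
      ext x; simp only [mem_preimage, mem_Ioo]
      constructor <;> rintro ⟨_, _⟩ <;> constructor <;> linarith
    simpa using map_volume_restrict_of_eqOn_affine (by norm_num) 1 measurableSet_Ioo
      (fun x hx => by rw [reflectDouble, if_pos hx.2]; ring) hpre
  have hhigh : (volume.restrict (Ioo (1 / 2) 1)).map reflectDouble
      = ENNReal.ofReal (1 / 2) • volume.restrict (Ioo 0 1) := by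
    have hpre : (fun x : ℝ => -2 * x + 2) ⁻¹' Ioo 0 1 = Ioo (1 / 2) 1 := by
      ext x; simp only [mem_preimage, mem_Ioo]
      constructor <;> rintro ⟨_, _⟩ <;> constructor <;> linarith
    simpa using map_volume_restrict_of_eqOn_affine (by norm_num) 2 measurableSet_Ioo
      (fun x hx => by rw [reflectDouble, if_neg (not_lt.2 hx.1.le)]; ring) hpre
  conv_lhs => rw [volume_restrict_Icc_eq_add_Ioo (b := 1 / 2) (by norm_num) (by norm_num)]
  rw [Measure.map_add _ _ hmeas, hlow, hhigh, ← add_smul,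
    ← ENNReal.ofReal_add (by norm_num) (by norm_num), Measure.restrict_congr_set Ioo_ae_eq_Icc]
  norm_num

theorem isCompleteMix_one_sub :
    IsCompleteMix (volume.restrict (Icc 0 1)) (volume.restrict (Icc 0 1)) (1 / 2)
      ![id, fun x : ℝ => 1 - x] where
  measurePreserving := Fin.forall_fin_two.2 ⟨.id _, measurePreserving_one_sub⟩
  sum_eq := .of_forall fun x => by norm_num [Fin.sum_univ_two]

theorem isCompleteMix_shiftHalf_reflectDouble :
    IsCompleteMix (volume.restrict (Icc 0 1)) (volume.restrict (Icc 0 1)) (1 / 2)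
      ![id, shiftHalf, reflectDouble] where
  measurePreserving i := by
    fin_cases i
    exacts [.id _, measurePreserving_shiftHalf, measurePreserving_reflectDouble]
  sum_eq := .of_forall fun x => by
    simp only [Fin.sum_univ_three, Matrix.cons_val, id]
    norm_num [add_shiftHalf_add_reflectDouble]

theorem exists_isCompleteMix_uniform_Icc_zero_one :
    ∀ n, 2 ≤ n → ∃ X : Fin n → ℝ → ℝ,
      IsCompleteMix (volume.restrict (Icc 0 1)) (volume.restrict (Icc 0 1)) (1 / 2) X
  | 2, _ => ⟨_, isCompleteMix_one_sub⟩
  | 3, _ => ⟨_, isCompleteMix_shiftHalf_reflectDouble⟩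
  | n + 4, _ =>
    have ⟨X, hX⟩ := exists_isCompleteMix_uniform_Icc_zero_one (n + 2) (by omega)
    ⟨_, hX.append isCompleteMix_one_sub⟩

theorem map_affine_volume_restrict_Icc_zero_one {a b : ℝ} (hab : a < b) :
    (volume.restrict (Icc 0 1)).map (fun x => (b - a) * x + a)
      = (ENNReal.ofReal (b - a))⁻¹ • volume.restrict (Icc a b) := by
  have hba : 0 < b - a := sub_pos.2 hab
  have hpre : (fun x => (b - a) * x + a) ⁻¹' Icc a b = Icc 0 1 := by
    ext x
    simp only [mem_preimage, mem_Icc]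
    constructor
    · rintro ⟨h0, h1⟩; constructor <;> nlinarith
    · rintro ⟨h0, h1⟩; constructor <;> nlinarith
  rw [map_volume_restrict_affine hba.ne' a hpre, abs_of_pos (inv_pos.2 hba),
    ENNReal.ofReal_inv_of_pos hba]

theorem uniform_interval_cm
    (a b : ℝ) (hab : a < b) (F : Measure ℝ)
    (hF : F = (ENNReal.ofReal (b - a))⁻¹ • volume.restrict (Set.Icc a b))
    (n : ℕ) (hn : 2 ≤ n) :
    ∃ (Ω : Type) (_ : MeasurableSpace Ω) (P : Measure Ω) (_ : IsProbabilityMeasure P)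
      (X : Fin n → Ω → ℝ), (∀ i, Measurable (X i)) ∧ (∀ i, P.map (X i) = F) ∧
      (∀ᵐ ω ∂P, ∑ i, X i ω = n * ((a + b) / 2)) := by
  obtain ⟨U, hU⟩ := exists_isCompleteMix_uniform_Icc_zero_one n hn
  have hX := hU.map_affine (b - a) a
  rw [map_affine_volume_restrict_Icc_zero_one hab, ← hF,
    show (b - a) * (1 / 2) + a = (a + b) / 2 by ring] at hX
  have hP : IsProbabilityMeasure (volume.restrict (Icc (0 : ℝ) 1)) := ⟨by simp⟩
  exact ⟨ℝ, _, _, hP, _, fun i => (hX.measurePreserving i).measurable,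
    fun i => (hX.measurePreserving i).map_eq, hX.sum_eq⟩
end

section
/- If F is n-completely mixable with center μ, X ~ F, and ||·|| is a law-determined norm, then for all t ∈ ℝ, setting s = (nμ - t)/(n-1), we have ||(X-t)_+|| ≤ (n-1)||(X-s)_-|| and ||(X-t)_-|| ≤ (n-1)||(X-s)_+||. -/
/-!
Take a complete mixture `Y₁ + ⋯ + Yₙ = nμ` of copies of `X`. Since `(n - 1) s = nμ - t`,
`Y₁ - t = ∑_{i ≥ 2} (s - Yᵢ) ≤ ∑_{i ≥ 2} (Yᵢ - s)₋` pointwise, so monotonicity, the triangle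
inequality and law invariance give `‖(X - t)₊‖ ≤ (n - 1) ‖(X - s)₋‖`. The second inequality is
the first one for the mixture `-Y₁, …, -Yₙ` of copies of `-X`.
-/

open MeasureTheory

/-- A law-determined norm on real random variables on a probability space `(Ω, P)`,
taking values in `[0, ∞]`. -/
structure LawDeterminedNorm (Ω : Type*) [MeasurableSpace Ω] (P : Measure Ω) where
  N : (Ω → ℝ) → ENNReal
  homog : ∀ (a : ℝ) (X : Ω → ℝ), N (fun ω => a * X ω) = ENNReal.ofReal |a| * N X
  triangle : ∀ X Y : Ω → ℝ, N (fun ω => X ω + Y ω) ≤ N X + N Y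
  definite : ∀ X : Ω → ℝ, N X = 0 → ∀ᵐ ω ∂P, X ω = 0
  law_invariant : ∀ X Y : Ω → ℝ, Measurable X → Measurable Y →
    P.map X = P.map Y → N X = N Y
  mono : ∀ X Y : Ω → ℝ, (∀ᵐ ω ∂P, 0 ≤ X ω ∧ X ω ≤ Y ω) → N X ≤ N Y

open Finset

theorem max_sub_le_sum_erase_max_neg {ι : Type*} [Fintype ι] [DecidableEq ι] (y : ι → ℝ)
    (j : ι) {t s : ℝ} (hts : (Fintype.card ι - 1) * s = ∑ i, y i - t) :
    max (y j - t) 0 ≤ ∑ i ∈ univ.erase j, max (-(y i - s)) 0 := by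
  have hsplit : y j - t = ∑ i ∈ univ.erase j, (s - y i) := by
    rw [sum_sub_distrib, sum_const, card_erase_of_mem (mem_univ j), card_univ, nsmul_eq_mul,
      Nat.cast_pred (Fintype.card_pos_iff.2 ⟨j⟩), hts, ← add_sum_erase _ _ (mem_univ j)]
    ring
  refine max_le ?_ (sum_nonneg fun i _ => le_max_right _ _)
  rw [hsplit]
  exact sum_le_sum fun i _ => by linarith [le_max_left (-(y i - s)) 0]

namespace LawDeterminedNorm

variable {Ω : Type*} [MeasurableSpace Ω] {P : Measure Ω} (nrm : LawDeterminedNorm Ω P)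

theorem N_zero : nrm.N (fun _ => 0) = 0 := by
  simpa using nrm.homog 0 (fun _ => 0)

theorem N_sum_le {ι : Type*} (I : Finset ι) (f : ι → Ω → ℝ) :
    nrm.N (fun ω => ∑ i ∈ I, f i ω) ≤ ∑ i ∈ I, nrm.N (f i) := by
  classical
  induction I using Finset.induction_on with
  | empty => simp [N_zero]
  | insert a I ha ih =>
    simp only [sum_insert ha]
    exact (nrm.triangle _ _).trans (add_le_add le_rfl ih)

theorem N_comp_eq_of_map_eq {g : ℝ → ℝ} (hg : Measurable g) {X Y : Ω → ℝ}
    (hX : Measurable X) (hY : Measurable Y) (hXY : P.map X = P.map Y) :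
    nrm.N (fun ω => g (X ω)) = nrm.N (fun ω => g (Y ω)) := by
  refine nrm.law_invariant _ _ (hg.comp hX) (hg.comp hY) ?_
  change P.map (g ∘ X) = P.map (g ∘ Y)
  rw [← Measure.map_map hg hX, ← Measure.map_map hg hY, hXY]

theorem N_max_sub_le_of_sum_ae_eq {ι : Type*} [Fintype ι] [Nonempty ι]
    {Y : ι → Ω → ℝ} (hYm : ∀ i, Measurable (Y i)) {X : Ω → ℝ} (hX : Measurable X)
    (hYX : ∀ i, P.map (Y i) = P.map X) {c : ℝ} (hsum : ∀ᵐ ω ∂P, ∑ i, Y i ω = c) {t s : ℝ}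
    (hts : (Fintype.card ι - 1) * s = c - t) :
    nrm.N (fun ω => max (X ω - t) 0) ≤
      (Fintype.card ι - 1) * nrm.N (fun ω => max (-(X ω - s)) 0) := by
  classical
  obtain ⟨j⟩ := ‹Nonempty ι›
  have hpos : Measurable fun x : ℝ => max (x - t) 0 := by fun_prop
  have hneg : Measurable fun x : ℝ => max (-(x - s)) 0 := by fun_prop
  have hpointwise : ∀ᵐ ω ∂P, 0 ≤ max (Y j ω - t) 0 ∧
      max (Y j ω - t) 0 ≤ ∑ i ∈ univ.erase j, max (-(Y i ω - s)) 0 := by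
    filter_upwards [hsum] with ω hω
    exact ⟨le_max_right _ _, max_sub_le_sum_erase_max_neg (Y · ω) j (by rw [hω, hts])⟩
  calc nrm.N (fun ω => max (X ω - t) 0)
      = nrm.N (fun ω => max (Y j ω - t) 0) :=
        nrm.N_comp_eq_of_map_eq hpos hX (hYm j) (hYX j).symm
    _ ≤ nrm.N (fun ω => ∑ i ∈ univ.erase j, max (-(Y i ω - s)) 0) := nrm.mono _ _ hpointwise
    _ ≤ ∑ i ∈ univ.erase j, nrm.N (fun ω => max (-(Y i ω - s)) 0) := nrm.N_sum_le _ _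
    _ = ∑ i ∈ univ.erase j, nrm.N (fun ω => max (-(X ω - s)) 0) :=
        sum_congr rfl fun i _ => nrm.N_comp_eq_of_map_eq hneg (hYm i) hX (hYX i)
    _ = (Fintype.card ι - 1) * nrm.N (fun ω => max (-(X ω - s)) 0) := by
        rw [sum_const, card_erase_of_mem (mem_univ j), card_univ, nsmul_eq_mul,
          ENNReal.natCast_sub, Nat.cast_one]

end LawDeterminedNorm

theorem norm_condition_cm_general
    (n : ℕ) (hn : 2 ≤ n) (Ω : Type*) [MeasurableSpace Ω] (P : Measure Ω)
    (F : Measure ℝ) (μ : ℝ)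
    (hCM : ∃ Y : Fin n → Ω → ℝ, (∀ i, Measurable (Y i)) ∧ (∀ i, P.map (Y i) = F) ∧
      (∀ᵐ ω ∂P, ∑ i, Y i ω = n * μ))
    (X : Ω → ℝ) (hX : Measurable X) (hXF : P.map X = F)
    (nrm : LawDeterminedNorm Ω P) (t s : ℝ) (hs : s = (n * μ - t) / (n - 1)) :
    nrm.N (fun ω => max (X ω - t) 0) ≤ (n - 1) * nrm.N (fun ω => max (-(X ω - s)) 0) ∧
    nrm.N (fun ω => max (-(X ω - t)) 0) ≤ (n - 1) * nrm.N (fun ω => max (X ω - s) 0) := by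
  obtain ⟨Y, hYm, hYF, hsum⟩ := hCM
  have : Nonempty (Fin n) := ⟨⟨0, by omega⟩⟩
  have hts : ((Fintype.card (Fin n) : ℝ) - 1) * s = n * μ - t := by
    have : (n : ℝ) - 1 ≠ 0 := by
      have : (2 : ℝ) ≤ n := by exact_mod_cast hn
      linarith
    rw [Fintype.card_fin, hs, mul_div_cancel₀ _ this]
  have hYX i : P.map (Y i) = P.map X := (hYF i).trans hXF.symm
  have hnegYX i : P.map (fun ω => -Y i ω) = P.map (fun ω => -X ω) := by
    change P.map (Neg.neg ∘ Y i) = P.map (Neg.neg ∘ X)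
    rw [← Measure.map_map measurable_neg (hYm i), ← Measure.map_map measurable_neg hX, hYX]
  have hnegsum : ∀ᵐ ω ∂P, ∑ i, -Y i ω = -(n * μ) := by
    filter_upwards [hsum] with ω hω
    rw [sum_neg_distrib, hω]
  constructor
  · simpa only [Fintype.card_fin] using nrm.N_max_sub_le_of_sum_ae_eq hYm hX hYX hsum hts
  · have := nrm.N_max_sub_le_of_sum_ae_eq (fun i => (hYm i).neg) hX.neg hnegYX hnegsum
      (t := -t) (s := -s) (by linarith)
    simpa only [Fintype.card_fin, Pi.neg_apply, neg_sub_neg, neg_sub] using this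

theorem norm_condition_cm
    (n : ℕ) (hn : 2 ≤ n) (Ω : Type*) [MeasurableSpace Ω] (P : Measure Ω)
    [IsProbabilityMeasure P] (F : Measure ℝ) (μ : ℝ)
    (hCM : ∃ Y : Fin n → Ω → ℝ, (∀ i, Measurable (Y i)) ∧ (∀ i, P.map (Y i) = F) ∧
      (∀ᵐ ω ∂P, ∑ i, Y i ω = n * μ))
    (X : Ω → ℝ) (hX : Measurable X) (hXF : P.map X = F)
    (nrm : LawDeterminedNorm Ω P) (t s : ℝ) (hs : s = (n * μ - t) / (n - 1)) :
    nrm.N (fun ω => max (X ω - t) 0) ≤ (n - 1) * nrm.N (fun ω => max (-(X ω - s)) 0) ∧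
    nrm.N (fun ω => max (-(X ω - t)) 0) ≤ (n - 1) * nrm.N (fun ω => max (X ω - s) 0) :=
  norm_condition_cm_general n hn Ω P F μ hCM X hX hXF nrm t s hs
end

section
/- For every n ≥ 1, the binomial distribution with parameters n and 1/n is n-completely mixable with center 1. -/
/-!
Throw `n` balls independently and uniformly into `n` bins, i.e. pick `f : Fin n → Fin n`
uniformly, and let `X i` be the number of balls in bin `i`. Each ball lands in bin `i` with
probability `1/n`, so `X i` is binomial with parameters `n` and `1/n`, while the bin counts
always add up to the number of balls, `n`.
-/

open MeasureTheory Finset ProbabilityTheory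
open scoped ENNReal

noncomputable def binomialMeasure (n : ℕ) (p : ℝ) : Measure ℝ :=
  ∑ k ∈ range (n + 1),
    ENNReal.ofReal (n.choose k * p ^ k * (1 - p) ^ (n - k)) • Measure.dirac (k : ℝ)

theorem choose_mul_one_div_pow_mul_one_sub_one_div_pow {m k : ℕ} (hk : k ≤ m) {q : ℝ}
    (hq : q ≠ 0) :
    m.choose k * (1 / q) ^ k * (1 - 1 / q) ^ (m - k) =
      m.choose k * (q - 1) ^ (m - k) / q ^ m := by
  obtain ⟨j, rfl⟩ := Nat.exists_eq_add_of_le hk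
  rw [Nat.add_sub_cancel_left, pow_add, one_sub_div hq, one_div_pow, div_pow]
  field_simp

theorem natCast_choose_mul_pow_mul_inv_eq_ofReal {m k q : ℕ} (hk : k ≤ m) (hq : q ≠ 0) :
    ((m.choose k * (q - 1) ^ (m - k) : ℕ) : ℝ≥0∞) * ((q ^ m : ℕ) : ℝ≥0∞)⁻¹ =
      ENNReal.ofReal (m.choose k * (1 / (q : ℝ)) ^ k * (1 - 1 / (q : ℝ)) ^ (m - k)) := by
  rw [choose_mul_one_div_pow_mul_one_sub_one_div_pow hk (Nat.cast_ne_zero.mpr hq),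
    ← div_eq_mul_inv, ← ENNReal.ofReal_natCast, ← ENNReal.ofReal_natCast (q ^ m),
    ← ENNReal.ofReal_div_of_pos (by positivity)]
  push_cast [Nat.cast_sub (Nat.one_le_iff_ne_zero.mpr hq)]
  rfl

theorem map_uniformOn_univ {Ω γ : Type*} [Fintype Ω] [MeasurableSpace Ω]
    [DiscreteMeasurableSpace Ω] [MeasurableSpace γ] (f : Ω → γ) :
    (uniformOn (Set.univ : Set Ω)).map f =
      ∑ ω, (Fintype.card Ω : ℝ≥0∞)⁻¹ • Measure.dirac (f ω) := by
  have hf : Measurable f := .of_discrete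
  conv_lhs => rw [← Measure.sum_smul_dirac (uniformOn (Set.univ : Set Ω))]
  rw [Measure.map_sum hf.aemeasurable, Measure.sum_fintype]
  simp [Measure.map_smul, Measure.map_dirac' hf, uniformOn_univ]

section BallsInBins

variable {α β : Type*} [Fintype α] [DecidableEq α] [Fintype β] [DecidableEq β]

theorem card_filter_fiber_eq (b : β) (S : Finset α) :
    #{f : α → β | ({a | f a = b} : Finset α) = S} =
      (Fintype.card β - 1) ^ (Fintype.card α - #S) := by
  have hpi : ({f : α → β | ({a | f a = b} : Finset α) = S} : Finset _) =
      Fintype.piFinset fun a => if a ∈ S then {b} else {b}ᶜ := by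
    ext f
    simp only [mem_filter, mem_univ, true_and, Fintype.mem_piFinset, Finset.ext_iff]
    refine forall_congr' fun a => ?_
    split_ifs with ha <;> simp [ha]
  rw [hpi, Fintype.card_piFinset]
  simp [apply_ite, prod_ite, filter_not, card_univ_sdiff, card_compl]

theorem card_filter_card_fiber_eq (b : β) (k : ℕ) :
    #{f : α → β | #{a | f a = b} = k} =
      (Fintype.card α).choose k * (Fintype.card β - 1) ^ (Fintype.card α - k) := by
  rw [card_eq_sum_card_fiberwise (f := fun f : α → β => ({a | f a = b} : Finset α))
    (t := powersetCard k univ) (fun f hf => by simpa using hf)]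
  have hfiber : ∀ S ∈ powersetCard k (univ : Finset α),
      #{f ∈ {f : α → β | #{a | f a = b} = k} | ({a | f a = b} : Finset α) = S} =
        (Fintype.card β - 1) ^ (Fintype.card α - k) := by
    intro S hS
    rw [mem_powersetCard_univ] at hS
    rw [filter_filter, ← hS, ← card_filter_fiber_eq b S]
    congr 1
    exact filter_congr fun f _ => and_iff_right_of_imp fun h => h ▸ rfl
  rw [sum_congr rfl hfiber, sum_const, card_powersetCard, card_univ, smul_eq_mul]

theorem map_card_fiber_uniformOn [MeasurableSpace (α → β)] [DiscreteMeasurableSpace (α → β)]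
    (b : β) :
    (uniformOn (Set.univ : Set (α → β))).map (fun f => (#{a | f a = b} : ℝ)) =
      binomialMeasure (Fintype.card α) (1 / Fintype.card β) := by
  rw [map_uniformOn_univ, binomialMeasure, Fintype.card_fun,
    ← sum_fiberwise_of_maps_to (g := fun f : α → β => #{a | f a = b})
      (t := range (Fintype.card α + 1)) fun f _ => ?_]
  · refine sum_congr rfl fun k hk => ?_
    rw [sum_congr rfl fun f hf => by rw [(mem_filter.mp hf).2], sum_const,
      card_filter_card_fiber_eq, ← Nat.cast_smul_eq_nsmul ℝ≥0∞, smul_smul,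
      natCast_choose_mul_pow_mul_inv_eq_ofReal (Nat.lt_succ_iff.mp (mem_range.mp hk))
        (Fintype.card_pos_iff.mpr ⟨b⟩).ne']
  · exact mem_range_succ_iff.mpr (card_le_univ _)

end BallsInBins

theorem binomial_n_inv_n_cm_general
    (n : ℕ) (F : Measure ℝ)
    (hF : F = ∑ k ∈ Finset.range (n + 1),
      ENNReal.ofReal ((n.choose k : ℝ) * (1 / n) ^ k * (1 - 1 / n) ^ (n - k)) •
        Measure.dirac (k : ℝ)) :
    ∃ (Ω : Type) (_ : MeasurableSpace Ω) (P : Measure Ω) (_ : IsProbabilityMeasure P)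
      (X : Fin n → Ω → ℝ), (∀ i, Measurable (X i)) ∧ (∀ i, P.map (X i) = F) ∧
      (∀ᵐ ω ∂P, ∑ i, X i ω = n * 1) := by
  refine ⟨Fin n → Fin n, inferInstance, uniformOn Set.univ,
    isProbabilityMeasure_uniformOn Set.finite_univ ⟨id, Set.mem_univ _⟩,
    fun i f => #{j | f j = i}, fun i => .of_discrete, fun i => ?_, .of_forall fun f => ?_⟩
  · rw [map_card_fiber_uniformOn, Fintype.card_fin, hF]
    rfl
  · rw [mul_one, ← Nat.cast_sum, ← card_eq_sum_card_fiberwise fun j _ => mem_univ (f j),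
      card_univ, Fintype.card_fin]

theorem binomial_n_inv_n_cm
    (n : ℕ) (hn : 1 ≤ n) (F : Measure ℝ)
    (hF : F = ∑ k ∈ Finset.range (n + 1),
      ENNReal.ofReal ((n.choose k : ℝ) * (1 / n) ^ k * (1 - 1 / n) ^ (n - k)) •
        Measure.dirac (k : ℝ)) :
    ∃ (Ω : Type) (_ : MeasurableSpace Ω) (P : Measure Ω) (_ : IsProbabilityMeasure P)
      (X : Fin n → Ω → ℝ), (∀ i, Measurable (X i)) ∧ (∀ i, P.map (X i) = F) ∧
      (∀ᵐ ω ∂P, ∑ i, X i ω = n * 1) :=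
  binomial_n_inv_n_cm_general n F hF
end

section
/- Suppose for each a in some index set there is an n-completely mixable distribution F_a on ℝ with common center μ, such that a ↦ F_a(x) is measurable for each x, and h is a probability measure on the index set. Then the mixture distribution F = ∫ F_a dh(a) is n-completely mixable with center μ. -/
/-!
Choose for every `a` a law `Q a` on `ℝⁿ` with marginals `F a` and coordinate sum `nμ` a.s.
The choice `a ↦ Q a` need not be measurable, so `∫ Q a dh(a)` makes no sense as it stands.
Instead, approximate `a` by `b (c k a)` with `c k : A → ℕ` measurable, so that the values of
`F (b (c k a))` on rational intervals tend to those of `F a`. Then `∫ Q (b (c k a)) dh(a)` is a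
genuine coupling of `G_k = ∫ F (b (c k a)) dh(a)`, and `G_k → G` weakly because, by dominated
convergence, `G_k` converges to `G` on the π-system of rational intervals. A convergent sequence is
tight, hence so are the couplings, and Prokhorov's theorem yields a weakly convergent subsequence.
Both constraints say that a continuous image of the coupling (a coordinate, resp. the sum) has a
prescribed law, so they pass to the limit.
-/

open MeasureTheory Filter Topology Set TopologicalSpace

theorem Measurable.exists_tendsto_comp_nat {A M : Type*} [MeasurableSpace A] [Nonempty A]
    [TopologicalSpace M] [PseudoMetrizableSpace M] [SecondCountableTopology M]
    [MeasurableSpace M] [OpensMeasurableSpace M] {Φ : A → M} (hΦ : Measurable Φ) :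
    ∃ (b : ℕ → A) (c : ℕ → A → ℕ), (∀ k, Measurable (c k)) ∧
      ∀ a, Tendsto (fun k => Φ (b (c k a))) atTop (𝓝 (Φ a)) := by
  let := pseudoMetrizableSpacePseudoMetric M
  have : Nonempty (range Φ) := (range_nonempty Φ).to_subtype
  choose b hb using fun j => (denseSeq (range Φ) j).2
  refine ⟨b, fun k => SimpleFunc.nearestPtInd (Φ ∘ b) k ∘ Φ,
    fun k => (SimpleFunc.nearestPtInd _ k).measurable.comp hΦ, fun a => ?_⟩
  have ha : Φ a ∈ closure (range (Φ ∘ b)) :=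
    map_mem_closure (f := Subtype.val) (x := (⟨Φ a, a, rfl⟩ : range Φ)) continuous_subtype_val
      (by rw [(denseRange_denseSeq (range Φ)).closure_eq]; exact mem_univ _)
      (by rintro _ ⟨j, rfl⟩; exact ⟨j, hb j⟩)
  exact SimpleFunc.tendsto_nearestPt ha

theorem continuous_finsetSum_apply {ι M : Type*} [Fintype ι] [TopologicalSpace M]
    [AddCommMonoid M] [ContinuousAdd M] : Continuous fun x : ι → M => ∑ i, x i :=
  continuous_finsetSum _ fun i _ => continuous_apply i

namespace MeasureTheory

theorem IsTightMeasureSet.of_map_eval {ι : Type*} [Fintype ι] {X : ι → Type*}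
    [∀ i, TopologicalSpace (X i)] [∀ i, MeasurableSpace (X i)] {S : Set (Measure (∀ i, X i))}
    (hS : ∀ i, IsTightMeasureSet (Measure.map (Function.eval i) '' S)) :
    IsTightMeasureSet S := by
  simp_rw [isTightMeasureSet_iff_exists_isCompact_measure_compl_le] at hS ⊢
  intro ε hε
  have hεi : 0 < ε / Fintype.card ι := ENNReal.div_pos hε.ne' (ENNReal.natCast_ne_top _)
  choose K hK hKS using fun i => hS i _ hεi
  refine ⟨univ.pi K, isCompact_univ_pi hK, fun P hP => ?_⟩
  calc P (univ.pi K)ᶜ ≤ ∑ i, P (Function.eval i ⁻¹' (K i)ᶜ) := by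
        refine (measure_mono fun x hx => ?_).trans (measure_iUnion_fintype_le _ _)
        simpa using hx
    _ ≤ ∑ _i : ι, ε / Fintype.card ι := by
        gcongr with i
        exact (Measure.le_map_apply (measurable_pi_apply i).aemeasurable _).trans
          (hKS i _ (mem_image_of_mem _ hP))
    _ ≤ ε := by
        rw [Finset.sum_const, Finset.card_univ, nsmul_eq_mul]
        exact ENNReal.mul_div_le

theorem ProbabilityMeasure.tendsto_of_tendsto_Ioc_rat {ι : Type*} {l : Filter ι}
    [l.IsCountablyGenerated] {ρ : ι → ProbabilityMeasure ℝ} {ρ₀ : ProbabilityMeasure ℝ}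
    (h : ∀ p q : ℚ,
      Tendsto (fun i => (ρ i : Measure ℝ) (Ioc p q)) l (𝓝 ((ρ₀ : Measure ℝ) (Ioc p q)))) :
    Tendsto ρ l (𝓝 ρ₀) := by
  refine (isPiSystem_Ioc ((↑) : ℚ → ℝ) ((↑) : ℚ → ℝ)).tendsto_probabilityMeasure_of_tendsto_of_mem
    ?_ ?_ ?_
  · rintro _ ⟨p, q, -, rfl⟩
    exact measurableSet_Ioc
  · intro u hu x hx
    obtain ⟨ε, hε, hball⟩ := Metric.isOpen_iff.1 hu x hx
    obtain ⟨p, hp⟩ := exists_rat_btwn (sub_lt_self x hε)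
    obtain ⟨q, hq⟩ := exists_rat_btwn (lt_add_of_pos_right x hε)
    refine ⟨Ioc p q, ⟨p, q, hp.2.trans hq.1, rfl⟩, Ioc_mem_nhds hp.2 hq.1, fun y hy => hball ?_⟩
    rw [Metric.mem_ball, Real.dist_eq, abs_lt]
    constructor <;> linarith [hy.1, hy.2, hp.1, hq.2]
  · rintro _ ⟨p, q, -, rfl⟩
    simpa [← ProbabilityMeasure.ennreal_coeFn_eq_coeFn_toMeasure, ENNReal.tendsto_coe] using h p q

namespace Measure

variable {A X Y : Type*} [MeasurableSpace A] [MeasurableSpace X] [MeasurableSpace Y]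

theorem map_eq_dirac_iff [MeasurableSingletonClass Y] {P : Measure X} [IsProbabilityMeasure P]
    {f : X → Y} (hf : Measurable f) {c : Y} : P.map f = dirac c ↔ ∀ᵐ x ∂P, f x = c := by
  constructor
  · intro h
    have : ∀ᵐ y ∂P.map f, y = c := by
      rw [h, ae_dirac_eq]
      exact eventually_pure.2 rfl
    exact (ae_map_iff hf.aemeasurable (measurableSet_singleton c)).1 this
  · intro h
    rw [map_congr h, map_const, measure_univ, one_smul]

theorem map_bind (m : Measure A) {κ : A → Measure X} (hκ : Measurable κ) {f : X → Y}
    (hf : Measurable f) : (m.bind κ).map f = m.bind fun a => (κ a).map f := by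
  ext s hs
  rw [map_apply hf hs, bind_apply (hf hs) hκ.aemeasurable,
    bind_apply hs (f := fun a => (κ a).map f) ((measurable_map f hf).comp hκ).aemeasurable]
  simp_rw [map_apply hf hs]

theorem tendsto_bind_apply {m : Measure A} [IsFiniteMeasure m] {κ : ℕ → A → Measure X}
    {κ₀ : A → Measure X} [∀ k a, IsProbabilityMeasure (κ k a)] (hκ : ∀ k, Measurable (κ k))
    (hκ₀ : Measurable κ₀) {s : Set X} (hs : MeasurableSet s)
    (h : ∀ a, Tendsto (fun k => κ k a s) atTop (𝓝 (κ₀ a s))) :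
    Tendsto (fun k => m.bind (κ k) s) atTop (𝓝 (m.bind κ₀ s)) := by
  simp_rw [bind_apply hs (hκ _).aemeasurable, bind_apply hs hκ₀.aemeasurable]
  exact tendsto_lintegral_of_dominated_convergence 1 (fun k => (measurable_coe hs).comp (hκ k))
    (fun k => ae_of_all _ fun a => prob_le_one) (by simp) (ae_of_all _ h)

end Measure

end MeasureTheory

theorem measurable_of_measurable_measure_Iic {A : Type*} [MeasurableSpace A]
    {F : A → Measure ℝ} [∀ a, IsProbabilityMeasure (F a)]
    (hF : ∀ x, Measurable fun a => F a (Iic x)) : Measurable F := by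
  refine .measure_of_isPiSystem_of_isProbabilityMeasure (borel_eq_generateFrom_Iic ℝ)
    isPiSystem_Iic ?_
  rintro _ ⟨x, rfl⟩
  exact hF x

section CompletelyMixable

variable {n : ℕ} {μ : ℝ}

def IsCMCoupling (μ : ℝ) (F : Measure ℝ) (Q : Measure (Fin n → ℝ)) : Prop :=
  (∀ i, Q.map (fun x => x i) = F) ∧ Q.map (fun x => ∑ i, x i) = Measure.dirac (n * μ)

def CompletelyMixable (n : ℕ) (μ : ℝ) (F : Measure ℝ) : Prop :=
  ∃ Q : Measure (Fin n → ℝ), IsCMCoupling μ F Q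

theorem IsCMCoupling.isProbabilityMeasure {F : Measure ℝ} {Q : Measure (Fin n → ℝ)}
    (hQ : IsCMCoupling μ F Q) : IsProbabilityMeasure Q := by
  refine ⟨?_⟩
  rw [← preimage_univ (f := fun x : Fin n → ℝ => ∑ i, x i),
    ← Measure.map_apply continuous_finsetSum_apply.measurable MeasurableSet.univ, hQ.2,
    measure_univ]

theorem completelyMixable_iff {F : Measure ℝ} :
    CompletelyMixable n μ F ↔ ∃ (Ω : Type) (_ : MeasurableSpace Ω) (P : Measure Ω)
      (_ : IsProbabilityMeasure P) (X : Fin n → Ω → ℝ),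
      (∀ i, Measurable (X i)) ∧ (∀ i, P.map (X i) = F) ∧ (∀ᵐ ω ∂P, ∑ i, X i ω = n * μ) := by
  have hsum : Measurable fun x : Fin n → ℝ => ∑ i, x i := continuous_finsetSum_apply.measurable
  constructor
  · rintro ⟨Q, hQ⟩
    have := hQ.isProbabilityMeasure
    exact ⟨_, _, Q, this, fun i x => x i, measurable_pi_apply, hQ.1,
      (Measure.map_eq_dirac_iff hsum).1 hQ.2⟩
  · rintro ⟨Ω, _, P, _, X, hX, hmarg, hsumX⟩
    have hXm : Measurable fun ω i => X i ω := measurable_pi_lambda _ hX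
    refine ⟨P.map fun ω i => X i ω, fun i => ?_, ?_⟩
    · rw [Measure.map_map (measurable_pi_apply i) hXm]
      exact hmarg i
    · rw [Measure.map_map hsum hXm]
      exact (Measure.map_eq_dirac_iff (hsum.comp hXm)).2 hsumX

theorem IsCMCoupling.bind {A : Type*} [MeasurableSpace A] {m : Measure A}
    [IsProbabilityMeasure m] {F : A → Measure ℝ} {Q : A → Measure (Fin n → ℝ)}
    (hQm : Measurable Q) (hQ : ∀ a, IsCMCoupling μ (F a) (Q a)) :
    IsCMCoupling μ (m.bind F) (m.bind Q) := by
  refine ⟨fun i => ?_, ?_⟩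
  · rw [Measure.map_bind m hQm (measurable_pi_apply i)]
    simp_rw [(hQ _).1 i]
  · rw [Measure.map_bind m hQm continuous_finsetSum_apply.measurable]
    simp_rw [(hQ _).2]
    rw [Measure.bind_const, measure_univ, one_smul]

theorem CompletelyMixable.of_tendsto {G : ℕ → ProbabilityMeasure ℝ} {G₀ : ProbabilityMeasure ℝ}
    (hG : Tendsto G atTop (𝓝 G₀)) (hcm : ∀ k, CompletelyMixable n μ (G k)) :
    CompletelyMixable n μ G₀ := by
  choose Q hQ using hcm
  let Q' k : ProbabilityMeasure (Fin n → ℝ) := ⟨Q k, (hQ k).isProbabilityMeasure⟩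
  have hGtight : IsTightMeasureSet {((ρ : ProbabilityMeasure ℝ) : Measure ℝ) | ρ ∈ range G} :=
    isTightMeasureSet_of_isCompact_closure (hG.isCompact_insert_range.of_isClosed_subset
      isClosed_closure (closure_minimal (subset_insert _ _) hG.isCompact_insert_range.isClosed))
  have hQtight : IsTightMeasureSet
      {((ρ : ProbabilityMeasure (Fin n → ℝ)) : Measure (Fin n → ℝ)) | ρ ∈ range Q'} := by
    refine .of_map_eval fun i => hGtight.subset ?_
    rintro _ ⟨_, ⟨_, ⟨k, rfl⟩, rfl⟩, rfl⟩
    exact ⟨G k, mem_range_self k, ((hQ k).1 i).symm⟩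
  obtain ⟨ν, -, φ, hφ, hν⟩ := (isCompact_closure_of_isTightMeasureSet hQtight).tendsto_subseq
    fun k => subset_closure (mem_range_self k)
  have hlim {f : (Fin n → ℝ) → ℝ} (hf : Continuous f) {ρ : ProbabilityMeasure ℝ}
      (hρ : Tendsto (fun k => (Q' (φ k)).map hf.aemeasurable) atTop (𝓝 ρ)) :
      (ν : Measure _).map f = ρ := by
    rw [← ProbabilityMeasure.toMeasure_map ν hf.aemeasurable,
      tendsto_nhds_unique (((ProbabilityMeasure.continuous_map hf).tendsto ν).comp hν) hρ]
  refine ⟨ν, fun i => hlim (continuous_apply i) ?_, hlim continuous_finsetSum_apply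
    (ρ := ⟨Measure.dirac ((n : ℝ) * μ), inferInstance⟩) ?_⟩
  · exact (hG.comp hφ.tendsto_atTop).congr fun k => (Subtype.ext ((hQ (φ k)).1 i)).symm
  · exact tendsto_const_nhds.congr fun k => (Subtype.ext (hQ (φ k)).2).symm

end CompletelyMixable

theorem mixture_of_cm_is_cm_general
    (n : ℕ) (μ : ℝ)
    (A : Type*) [MeasurableSpace A] (h : Measure A) [IsProbabilityMeasure h]
    (F : A → Measure ℝ) [∀ a, IsProbabilityMeasure (F a)]
    (hCM : ∀ a : A, ∃ (Ω : Type) (_ : MeasurableSpace Ω) (P : Measure Ω)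
      (_ : IsProbabilityMeasure P) (X : Fin n → Ω → ℝ),
      (∀ i, Measurable (X i)) ∧ (∀ i, P.map (X i) = F a) ∧
      (∀ᵐ ω ∂P, ∑ i, X i ω = n * μ))
    (hmeas : ∀ x : ℝ, Measurable fun a => F a (Set.Iic x))
    (G : Measure ℝ) [IsProbabilityMeasure G]
    (hG : ∀ x : ℝ, G (Set.Iic x) = ∫⁻ a, F a (Set.Iic x) ∂h) :
    ∃ (Ω : Type) (_ : MeasurableSpace Ω) (P : Measure Ω) (_ : IsProbabilityMeasure P)
      (X : Fin n → Ω → ℝ), (∀ i, Measurable (X i)) ∧ (∀ i, P.map (X i) = G) ∧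
      (∀ᵐ ω ∂P, ∑ i, X i ω = n * μ) := by
  have hF : Measurable F := measurable_of_measurable_measure_Iic hmeas
  have : IsProbabilityMeasure (h.bind F) :=
    isProbabilityMeasure_bind hF.aemeasurable (ae_of_all _ inferInstance)
  have hGF : G = h.bind F := Measure.ext_of_Iic _ _ fun x => by
    rw [hG, Measure.bind_apply measurableSet_Iic hF.aemeasurable]
  choose Q hQ using fun a => completelyMixable_iff.2 (hCM a)
  have := nonempty_of_isProbabilityMeasure h
  have hΦ : Measurable fun a (pq : ℚ × ℚ) => F a (Ioc (pq.1 : ℝ) pq.2) :=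
    measurable_pi_lambda _ fun pq => (Measure.measurable_coe measurableSet_Ioc).comp hF
  obtain ⟨b, c, hc, hbc⟩ := hΦ.exists_tendsto_comp_nat
  have hFk k : Measurable fun a => F (b (c k a)) := (measurable_from_nat (f := F ∘ b)).comp (hc k)
  let Gk k : ProbabilityMeasure ℝ := ⟨h.bind fun a => F (b (c k a)),
    isProbabilityMeasure_bind (hFk k).aemeasurable (ae_of_all _ inferInstance)⟩
  refine completelyMixable_iff.1 (CompletelyMixable.of_tendsto (G := Gk) (G₀ := ⟨G, ‹_›⟩) ?_
    fun k => ⟨_, .bind ((measurable_from_nat (f := Q ∘ b)).comp (hc k)) fun a => hQ (b (c k a))⟩)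
  refine ProbabilityMeasure.tendsto_of_tendsto_Ioc_rat fun p q => ?_
  simp only [hGF]
  exact Measure.tendsto_bind_apply hFk hF measurableSet_Ioc fun a =>
    tendsto_pi_nhds.1 (hbc a) (p, q)

theorem mixture_of_cm_is_cm
    (n : ℕ) (hn : 1 ≤ n) (μ : ℝ)
    (A : Type*) [MeasurableSpace A] (h : Measure A) [IsProbabilityMeasure h]
    (F : A → Measure ℝ) [∀ a, IsProbabilityMeasure (F a)]
    (hCM : ∀ a : A, ∃ (Ω : Type) (_ : MeasurableSpace Ω) (P : Measure Ω)
      (_ : IsProbabilityMeasure P) (X : Fin n → Ω → ℝ),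
      (∀ i, Measurable (X i)) ∧ (∀ i, P.map (X i) = F a) ∧
      (∀ᵐ ω ∂P, ∑ i, X i ω = n * μ))
    (hmeas : ∀ x : ℝ, Measurable fun a => F a (Set.Iic x))
    (G : Measure ℝ) [IsProbabilityMeasure G]
    (hG : ∀ x : ℝ, G (Set.Iic x) = ∫⁻ a, F a (Set.Iic x) ∂h) :
    ∃ (Ω : Type) (_ : MeasurableSpace Ω) (P : Measure Ω) (_ : IsProbabilityMeasure P)
      (X : Fin n → Ω → ℝ), (∀ i, Measurable (X i)) ∧ (∀ i, P.map (X i) = G) ∧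
      (∀ᵐ ω ∂P, ∑ i, X i ω = n * μ) :=
  mixture_of_cm_is_cm_general n μ A h F hCM hmeas G hG
end

section
/- If F is an n-completely mixable distribution on ℝ with center μ, then F is a mixture of n-discrete uniform distributions with mean μ: there exists a probability measure h on ℝⁿ concentrated on {a ∈ ℝⁿ : a_1+...+a_n = nμ} such that F(x) = ∫ F_a(x) dh(a) for all x, where F_a is the n-discrete uniform distribution on the coordinates of a. -/
/-!
The mixing measure is the joint law of `(X_1, …, X_n)`. Since `F_a(x) = #{i | a_i ≤ x} / n`
is the average of the indicators of `{a | a_i ≤ x}`, integrating it against the joint law gives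
the average of the marginal probabilities `P(X_i ≤ x)`, each of which is `F(x)`.
-/

open MeasureTheory

theorem lintegral_card_filter {α ι : Type*} [MeasurableSpace α] [Fintype ι] (ν : Measure α)
    {p : ι → α → Prop} [∀ a, DecidablePred (p · a)] (hp : ∀ i, MeasurableSet {a | p i a}) :
    ∫⁻ a, ((Finset.univ.filter fun i => p i a).card : ENNReal) ∂ν = ∑ i, ν {a | p i a} := by
  have hcount : ∀ a, ((Finset.univ.filter fun i => p i a).card : ENNReal) =
      ∑ i, {a | p i a}.indicator 1 a := fun a => by
    simp only [Finset.natCast_card_filter, Set.indicator_apply, Set.mem_ofPred_eq, Pi.one_apply]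
  simp only [hcount, lintegral_finsetSum _ fun i _ => measurable_one.indicator (hp i),
    lintegral_indicator_one (hp _)]

theorem lintegral_card_filter_mem_div_card {ι β : Type*} [Fintype ι] [Nonempty ι]
    [MeasurableSpace β] {ν : Measure (ι → β)} {F : Measure β}
    (hmarg : ∀ i, ν.map (fun a => a i) = F) {s : Set β} [DecidablePred (· ∈ s)]
    (hs : MeasurableSet s) :
    ∫⁻ a, ((Finset.univ.filter fun i => a i ∈ s).card : ENNReal) / Fintype.card ι ∂ν = F s := by
  have hcard : (Fintype.card ι : ENNReal) ≠ 0 := by simp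
  have hmarg_s : ∀ i, ν {a | a i ∈ s} = F s := fun i => by
    rw [← hmarg i, Measure.map_apply (measurable_pi_apply i) hs]
    rfl
  simp_rw [div_eq_mul_inv]
  rw [lintegral_mul_const' _ _ (ENNReal.inv_ne_top.mpr hcard),
    lintegral_card_filter ν fun i => measurable_pi_apply i hs]
  simp only [hmarg_s, Finset.sum_const, Finset.card_univ, nsmul_eq_mul]
  rw [mul_comm, ← mul_assoc, ENNReal.inv_mul_cancel hcard (ENNReal.natCast_ne_top _), one_mul]

theorem cm_is_mixture_of_discrete_uniforms_general
    (n : ℕ) (hn : 1 ≤ n) (F : Measure ℝ) (μ : ℝ)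
    (hCM : ∃ (Ω : Type) (_ : MeasurableSpace Ω) (P : Measure Ω) (_ : IsProbabilityMeasure P)
      (X : Fin n → Ω → ℝ), (∀ i, Measurable (X i)) ∧ (∀ i, P.map (X i) = F) ∧
      (∀ᵐ ω ∂P, ∑ i, X i ω = n * μ)) :
    ∃ h : Measure (Fin n → ℝ), IsProbabilityMeasure h ∧
      h {a : Fin n → ℝ | ∑ i, a i = n * μ}ᶜ = 0 ∧
      ∀ x : ℝ, F (Set.Iic x) =
        ∫⁻ a, (((Finset.univ.filter fun i => a i ≤ x).card : ENNReal) / n) ∂h := by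
  obtain ⟨Ω, _, P, _, X, hX, hXF, hsum⟩ := hCM
  have hjoint : Measurable fun ω i => X i ω := measurable_pi_lambda _ hX
  have : Nonempty (Fin n) := ⟨⟨0, hn⟩⟩
  refine ⟨P.map fun ω i => X i ω, Measure.isProbabilityMeasure_map hjoint.aemeasurable, ?_,
    fun x => ?_⟩
  · exact ae_iff.mp <| (ae_map_iff hjoint.aemeasurable
      (measurableSet_eq_fun (by fun_prop) measurable_const)).mpr hsum
  · have hmarg : ∀ i, (P.map fun ω i => X i ω).map (fun a => a i) = F := fun i => by
      rw [Measure.map_map (measurable_pi_apply i) hjoint, ← hXF i]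
      rfl
    simpa using (lintegral_card_filter_mem_div_card hmarg measurableSet_Iic).symm

theorem cm_is_mixture_of_discrete_uniforms
    (n : ℕ) (hn : 1 ≤ n) (F : Measure ℝ) [IsProbabilityMeasure F] (μ : ℝ)
    (hCM : ∃ (Ω : Type) (_ : MeasurableSpace Ω) (P : Measure Ω) (_ : IsProbabilityMeasure P)
      (X : Fin n → Ω → ℝ), (∀ i, Measurable (X i)) ∧ (∀ i, P.map (X i) = F) ∧
      (∀ᵐ ω ∂P, ∑ i, X i ω = n * μ)) :
    ∃ h : Measure (Fin n → ℝ), IsProbabilityMeasure h ∧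
      h {a : Fin n → ℝ | ∑ i, a i = n * μ}ᶜ = 0 ∧
      ∀ x : ℝ, F (Set.Iic x) =
        ∫⁻ a, (((Finset.univ.filter fun i => a i ≤ x).card : ENNReal) / n) ∂h :=
  cm_is_mixture_of_discrete_uniforms_general n hn F μ hCM
end

section
/- Normal distributions N(μ_1,σ_1²),...,N(μ_n,σ_n²) with σ_1+...+σ_n ≥ 2·max_i σ_i are jointly mixable: there exist jointly Gaussian random variables X_i ~ N(μ_i, σ_i²) with X_1+...+X_n = μ_1+...+μ_n almost surely. -/
/-!
If `z₁, …, zₙ ∈ ℂ` satisfy `|zᵢ| = σᵢ` and `∑ zᵢ = 0`, and `(Z₁, Z₂)` is a standard Gaussian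
vector in the plane, then `Xᵢ = μᵢ + Re zᵢ · Z₁ + Im zᵢ · Z₂ ~ N(μᵢ, σᵢ²)` and `∑ Xᵢ = ∑ μᵢ`.
Such `zᵢ` are the edges of a closed polygon with side lengths `σᵢ`, which exists as soon as no
side is longer than the sum of the others, i.e. `2 max σᵢ ≤ ∑ σᵢ`.
-/

open MeasureTheory ProbabilityTheory
open scoped NNReal

lemma abs_add_le_of_mul_nonpos {x y M : ℝ} (hx : |x| ≤ M) (hy : |y| ≤ M) (hxy : x * y ≤ 0) :
    |x + y| ≤ M := by
  rw [abs_le] at hx hy ⊢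
  rcases mul_nonpos_iff.mp hxy with ⟨hx0, hy0⟩ | ⟨hx0, hy0⟩ <;> constructor <;> linarith

/-- Greedy balancing: each new term goes to the side that currently has the smaller sum. -/
lemma Finset.exists_subset_abs_sum_sub_sum_sdiff_le {ι : Type*} [DecidableEq ι] (s : Finset ι)
    (f : ι → ℝ) {M : ℝ} (hM : 0 ≤ M) (hf : ∀ i ∈ s, |f i| ≤ M) :
    ∃ t ⊆ s, |∑ i ∈ t, f i - ∑ i ∈ s \ t, f i| ≤ M := by
  induction s using Finset.induction_on with
  | empty => exact ⟨∅, subset_rfl, by simpa using hM⟩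
  | insert a s ha ih =>
    obtain ⟨t, hts, ht⟩ := ih fun i hi => hf i (mem_insert_of_mem hi)
    have hat : a ∉ t := fun h => ha (hts h)
    have hfa : |f a| ≤ M := hf a (mem_insert_self a s)
    set D := ∑ i ∈ t, f i - ∑ i ∈ s \ t, f i
    by_cases hD : f a * D ≤ 0
    · refine ⟨insert a t, insert_subset_insert a hts, ?_⟩
      rw [insert_sdiff_insert, sdiff_insert_of_notMem ha, sum_insert hat, add_sub_assoc]
      exact abs_add_le_of_mul_nonpos hfa ht hD
    · refine ⟨t, hts.trans (subset_insert a s), ?_⟩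
      rw [insert_sdiff_of_notMem s hat, sum_insert (fun h => ha (mem_sdiff.mp h).1),
        show ∑ i ∈ t, f i - (f a + ∑ i ∈ s \ t, f i) = -f a + D by ring]
      exact abs_add_le_of_mul_nonpos (by rwa [abs_neg]) ht (by nlinarith)

lemma Complex.exists_norm_eq_one_norm_add_mul_eq {a b L : ℝ} (ha : 0 ≤ a) (hb : 0 ≤ b)
    (hL₁ : |a - b| ≤ L) (hL₂ : L ≤ a + b) :
    ∃ u : ℂ, ‖u‖ = 1 ∧ ‖(a : ℂ) + b * u‖ = L := by
  let g : ℝ → ℝ := fun θ => ‖(a : ℂ) + b * exp (θ * I)‖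
  have hg0 : g 0 = a + b := by
    simp only [g, ofReal_zero, zero_mul, exp_zero, mul_one]
    exact_mod_cast abs_of_nonneg (add_nonneg ha hb)
  have hgπ : g Real.pi = |a - b| := by
    simp only [g, exp_pi_mul_I, mul_neg_one, ← sub_eq_add_neg]
    exact_mod_cast Complex.norm_real (a - b)
  obtain ⟨θ, -, hθ⟩ :=
    intermediate_value_Icc' Real.pi_pos.le (by fun_prop : Continuous g).continuousOn
    (show L ∈ Set.Icc (g Real.pi) (g 0) by rw [hg0, hgπ]; exact ⟨hL₁, hL₂⟩)
  exact ⟨exp (θ * I), norm_exp_ofReal_mul_I θ, hθ⟩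

/-- Put the longest side `r j` opposite the other sides split into two groups whose sums `a`, `b`
differ by at most `r j`; then `a`, `b`, `r j` form a triangle, and the polygon is the triangle with
its two other edges subdivided. -/
theorem Complex.exists_norm_eq_sum_eq_zero {ι : Type*} [Fintype ι] (r : ι → ℝ)
    (hr : ∀ i, 0 ≤ r i) (h : ∀ i, 2 * r i ≤ ∑ j, r j) :
    ∃ z : ι → ℂ, (∀ i, ‖z i‖ = r i) ∧ ∑ i, z i = 0 := by
  classical
  cases isEmpty_or_nonempty ι
  · exact ⟨0, isEmptyElim, by simp⟩
  obtain ⟨j, hj⟩ := Finite.exists_max r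
  set s := Finset.univ.erase j
  obtain ⟨t, hts, ht⟩ := s.exists_subset_abs_sum_sub_sum_sdiff_le r (hr j)
    fun i _ => (abs_of_nonneg (hr i)).trans_le (hj i)
  set a := ∑ i ∈ t, r i
  set b := ∑ i ∈ s \ t, r i
  have hab : a + b = ∑ i, r i - r j := by
    rw [add_comm, Finset.sum_sdiff hts, eq_sub_iff_add_eq,
      Finset.sum_erase_add _ _ (Finset.mem_univ j)]
  obtain ⟨u, hu, hL⟩ := exists_norm_eq_one_norm_add_mul_eq
    (Finset.sum_nonneg fun i _ => hr i) (Finset.sum_nonneg fun i _ => hr i) ht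
    (by linarith [h j])
  let z : ι → ℂ := fun i => if i = j then -(a + b * u) else if i ∈ t then r i else r i * u
  refine ⟨z, fun i => ?_, ?_⟩
  · by_cases hij : i = j
    · simpa only [z, hij, if_pos rfl, norm_neg] using hL
    by_cases hit : i ∈ t
    · simp [z, hij, hit, abs_of_nonneg (hr i)]
    · simp [z, hij, hit, hu, abs_of_nonneg (hr i)]
  · have hzs : ∑ i ∈ s, z i = a + b * u := by
      rw [← Finset.sum_sdiff hts, add_comm]
      push_cast [a, b, Finset.sum_mul]
      congr 1 <;> refine Finset.sum_congr rfl fun i hi => ?_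
      · simp [z, (Finset.mem_erase.mp (hts hi)).1, hi]
      · obtain ⟨his, hit⟩ := Finset.mem_sdiff.mp hi
        simp [z, (Finset.mem_erase.mp his).1, hit]
    rw [← Finset.add_sum_erase _ _ (Finset.mem_univ j), hzs]
    simp [z]

lemma map_linear_prod_gaussianReal (m₁ m₂ : ℝ) (v₁ v₂ : ℝ≥0) (c d : ℝ) :
    ((gaussianReal m₁ v₁).prod (gaussianReal m₂ v₂)).map (fun p => c * p.1 + d * p.2) =
      gaussianReal (c * m₁ + d * m₂)
        (.mk (c ^ 2) (sq_nonneg c) * v₁ + .mk (d ^ 2) (sq_nonneg d) * v₂) := by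
  have hmul (e : ℝ) : Measurable (e * · : ℝ → ℝ) := measurable_const_mul e
  apply gaussianReal_add_gaussianReal_of_indepFun (indepFun_prod (hmul c) (hmul d))
  · rw [← Function.comp_def (c * ·), ← Measure.map_map (hmul c) measurable_fst,
      Measure.map_fst_prod, measure_univ, one_smul, gaussianReal_map_const_mul]
  · rw [← Function.comp_def (d * ·), ← Measure.map_map (hmul d) measurable_snd,
      Measure.map_snd_prod, measure_univ, one_smul, gaussianReal_map_const_mul]

theorem gaussian_jm_sufficient
    (n : ℕ) (μ : Fin n → ℝ) (σ : Fin n → NNReal)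
    (hσ : 2 * Finset.univ.sup σ ≤ ∑ i, σ i) :
    ∃ (Ω : Type) (_ : MeasurableSpace Ω) (P : Measure Ω) (_ : IsProbabilityMeasure P)
      (X : Fin n → Ω → ℝ), (∀ i, Measurable (X i)) ∧
      (∀ i, P.map (X i) = gaussianReal (μ i) (σ i ^ 2)) ∧
      (∀ᵐ ω ∂P, ∑ i, X i ω = ∑ i, μ i) := by
  have hσ' (i : Fin n) : 2 * (σ i : ℝ) ≤ ∑ j, (σ j : ℝ) := by
    exact_mod_cast le_trans (by gcongr; exact Finset.le_sup (Finset.mem_univ i)) hσ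
  obtain ⟨z, hz, hz0⟩ : ∃ z : Fin n → ℂ, (∀ i, ‖z i‖ = σ i) ∧ ∑ i, z i = 0 :=
    Complex.exists_norm_eq_sum_eq_zero _ (fun i => (σ i).2) hσ'
  refine ⟨ℝ × ℝ, inferInstance, (gaussianReal 0 1).prod (gaussianReal 0 1), inferInstance,
    fun i p => μ i + ((z i).re * p.1 + (z i).im * p.2), fun i => by fun_prop, fun i => ?_,
    ae_of_all _ fun p => ?_⟩
  · dsimp only
    rw [← Function.comp_def (μ i + ·), ← Measure.map_map (measurable_const_add _) (by fun_prop),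
      map_linear_prod_gaussianReal, gaussianReal_map_const_add]
    congr 1
    · ring
    · have hzi : (z i).re ^ 2 + (z i).im ^ 2 = (σ i : ℝ) ^ 2 := by
        rw [← hz i, Complex.sq_norm, Complex.normSq_apply]
        ring
      ext
      simpa using hzi
  · simp only [Finset.sum_add_distrib, ← Finset.sum_mul, ← Complex.re_sum, ← Complex.im_sum,
      hz0, Complex.zero_re, Complex.zero_im]
    ring
end

section
/- If there exist random variables X_i ~ N(μ_i, σ_i²), i = 1,...,n, with X_1+...+X_n constant almost surely, then σ_1+...+σ_n ≥ 2·max_i σ_i. -/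
open MeasureTheory ProbabilityTheory
open scoped NNReal ENNReal

/-! The standard deviation `√Var[X]` is the `L²` norm of the centred variable `X - 𝔼[X]`, hence
subadditive. If `∑ i, X i` is almost surely constant, then `X j` is, up to a constant,
`-∑ i ≠ j, X i`, so `σ j ≤ ∑ i ≠ j, σ i` for every `j`; for the largest `σ j` this is the claim.
Gaussianity only provides finite second moments and `Var[X i] = σ i ^ 2`. -/

lemma NNReal.two_mul_sup_le_sum {ι : Type*} [DecidableEq ι] {s : Finset ι} {f : ι → ℝ≥0}
    (h : ∀ j ∈ s, f j ≤ ∑ i ∈ s.erase j, f i) : 2 * s.sup f ≤ ∑ i ∈ s, f i := by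
  rcases s.eq_empty_or_nonempty with rfl | hs
  · simp
  obtain ⟨j, hj, hsup⟩ := s.exists_mem_eq_sup hs f
  calc 2 * s.sup f = f j + f j := by rw [hsup, two_mul]
    _ ≤ f j + ∑ i ∈ s.erase j, f i := by gcongr; exact h j hj
    _ = ∑ i ∈ s, f i := Finset.add_sum_erase s f hj

lemma ProbabilityTheory.HasLaw.memLp {Ω E : Type*} {mΩ : MeasurableSpace Ω} [MeasurableSpace E]
    [NormedAddCommGroup E] {X : Ω → E} {μ : Measure E} {P : Measure Ω} {p : ℝ≥0∞}
    (hX : HasLaw X μ P) (h : MemLp id p μ) : MemLp X p P := by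
  rw [← hX.map_eq] at h
  exact (memLp_map_measure_iff h.1 hX.aemeasurable).1 h

section StandardDeviation

variable {Ω ι : Type*} {mΩ : MeasurableSpace Ω} {μ : Measure Ω}

variable (μ) in
lemma sq_eLpNorm_sub_integral (X : Ω → ℝ) :
    eLpNorm (fun ω ↦ X ω - μ[X]) 2 μ ^ 2 = eVar[X; μ] := by
  have := eLpNorm_nnreal_pow_eq_lintegral (f := fun ω ↦ X ω - μ[X]) (μ := μ) (p := 2) two_ne_zero
  simpa [evariance] using this

lemma eLpNorm_sub_integral_eq_ofReal_sqrt_variance [IsFiniteMeasure μ] {X : Ω → ℝ}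
    (hX : MemLp X 2 μ) : eLpNorm (fun ω ↦ X ω - μ[X]) 2 μ = ENNReal.ofReal √Var[X; μ] := by
  refine (ENNReal.pow_right_strictMono two_ne_zero).injective ?_
  rw [sq_eLpNorm_sub_integral, ← ENNReal.ofReal_pow (Real.sqrt_nonneg _),
    Real.sq_sqrt (variance_nonneg X μ), hX.ofReal_variance_eq]

lemma sqrt_variance_sum_le [IsFiniteMeasure μ] {X : ι → Ω → ℝ} {s : Finset ι}
    (hX : ∀ i ∈ s, MemLp (X i) 2 μ) :
    √Var[∑ i ∈ s, X i; μ] ≤ ∑ i ∈ s, √Var[X i; μ] := by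
  have hcenter : (fun ω ↦ (∑ i ∈ s, X i) ω - μ[∑ i ∈ s, X i])
      = ∑ i ∈ s, fun ω ↦ X i ω - μ[X i] := by
    ext ω
    simp [integral_finsetSum s fun i hi ↦ (hX i hi).integrable one_le_two]
  rw [← ENNReal.ofReal_le_ofReal_iff (by positivity),
    ENNReal.ofReal_sum_of_nonneg fun _ _ ↦ Real.sqrt_nonneg _,
    ← eLpNorm_sub_integral_eq_ofReal_sqrt_variance (memLp_finsetSum' s hX), hcenter]
  calc eLpNorm (∑ i ∈ s, fun ω ↦ X i ω - μ[X i]) 2 μ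
      ≤ ∑ i ∈ s, eLpNorm (fun ω ↦ X i ω - μ[X i]) 2 μ :=
        eLpNorm_sum_le (fun i hi ↦ ((hX i hi).sub (memLp_const _)).1) one_le_two
    _ = ∑ i ∈ s, ENNReal.ofReal √Var[X i; μ] :=
        Finset.sum_congr rfl fun i hi ↦ eLpNorm_sub_integral_eq_ofReal_sqrt_variance (hX i hi)

lemma sqrt_variance_le_sum_erase_of_sum_ae_eq_const [IsProbabilityMeasure μ] [Fintype ι]
    [DecidableEq ι] {X : ι → Ω → ℝ} (hX : ∀ i, MemLp (X i) 2 μ) {c : ℝ}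
    (hc : ∀ᵐ ω ∂μ, ∑ i, X i ω = c) (j : ι) :
    √Var[X j; μ] ≤ ∑ i ∈ Finset.univ.erase j, √Var[X i; μ] := by
  have hrest : MemLp (∑ i ∈ Finset.univ.erase j, X i) 2 μ := memLp_finsetSum' _ fun i _ ↦ hX i
  have hXj : X j =ᵐ[μ] fun ω ↦ c - (∑ i ∈ Finset.univ.erase j, X i) ω := by
    filter_upwards [hc] with ω hω
    rw [← hω, ← Finset.add_sum_erase _ _ (Finset.mem_univ j), Finset.sum_apply]
    ring
  rw [variance_congr hXj, variance_const_sub hrest.1]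
  exact sqrt_variance_sum_le fun i _ ↦ hX i

end StandardDeviation

theorem gaussian_jm_necessary
    (n : ℕ) (μ : Fin n → ℝ) (σ : Fin n → NNReal)
    (Ω : Type*) [MeasurableSpace Ω] (P : Measure Ω) [IsProbabilityMeasure P]
    (X : Fin n → Ω → ℝ) (hmeas : ∀ i, Measurable (X i))
    (hlaw : ∀ i, P.map (X i) = gaussianReal (μ i) (σ i ^ 2))
    (c : ℝ) (hmix : ∀ᵐ ω ∂P, ∑ i, X i ω = c) :
    2 * Finset.univ.sup σ ≤ ∑ i, σ i := by
  have hX : ∀ i, HasLaw (X i) (gaussianReal (μ i) (σ i ^ 2)) P :=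
    fun i ↦ ⟨(hmeas i).aemeasurable, hlaw i⟩
  have hstd : ∀ i, √Var[X i; P] = σ i := fun i ↦ by
    rw [(hX i).variance_eq, variance_id_gaussianReal, NNReal.coe_pow, Real.sqrt_sq (σ i).coe_nonneg]
  refine NNReal.two_mul_sup_le_sum fun j _ ↦ ?_
  have hσj := sqrt_variance_le_sum_erase_of_sum_ae_eq_const
    (fun i ↦ (hX i).memLp (memLp_id_gaussianReal 2)) hmix j
  simp only [hstd] at hσj
  exact_mod_cast hσj
end

section
/- For distributions F_1,...,F_n on ℝ with finite means and any p ∈ (0,1), the worst-case Value-at-Risk satisfies sup{VaR_p(S) : S ∈ D_n} ≤ (1/(1-p)) Σ_{i=1}^n ∫_p^1 F_i^{-1}(q) dq, where D_n = {X_1+...+X_n : X_i ~ F_i} and VaR_p(X) = inf{x : P(X ≤ x) ≥ p}. -/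
open MeasureTheory

/-! The quantile function `Q` of a law `μ` pushes Lebesgue measure on `(0, 1)` forward to `μ`, so
`∫ (x - t)⁺ dμ = ∫₀¹ (Q q - t)⁺ dq`. As `Q` is monotone, this gives `(1 - p) (Q p - t) ≤ ∫ (x - t)⁺ dμ`
for every `t`, with `(1 - p) Q p + ∫ (x - Q p)⁺ dμ = ∫ₚ¹ Q q dq`. Apply the inequality to the law of
`S = ∑ Xᵢ` at `t = ∑ tᵢ`, where `tᵢ = Fᵢ⁻¹(p)`, bound `(S - ∑ tᵢ)⁺ ≤ ∑ (Xᵢ - tᵢ)⁺`, and use the equality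
for each marginal. -/

open Set Filter Topology ProbabilityTheory

-- `sInf` gives junk values outside `(0, 1)`, where the set is empty or not bounded below.
noncomputable def quantile (μ : Measure ℝ) (q : ℝ) : ℝ :=
  sInf {x : ℝ | ENNReal.ofReal q ≤ μ (Iic x)}

section quantile

variable {μ : Measure ℝ} {p q : ℝ}

lemma nonempty_cdf_ge (hq : q < 1) : {x | q ≤ cdf μ x}.Nonempty :=
  ((tendsto_cdf_atTop μ).eventually_const_le hq).exists

lemma bddBelow_cdf_ge (hq : 0 < q) : BddBelow {x | q ≤ cdf μ x} := by
  obtain ⟨b, hb⟩ := ((tendsto_cdf_atBot μ).eventually_lt_const hq).exists_forall_of_atBot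
  exact ⟨b, fun x hx => le_of_not_ge fun hxb => (hb x hxb).not_ge hx⟩

variable [IsProbabilityMeasure μ]

lemma quantile_eq_sInf_cdf : quantile μ q = sInf {x | q ≤ cdf μ x} := by
  simp only [quantile, ← ofReal_cdf, ENNReal.ofReal_le_ofReal_iff (cdf_nonneg μ _)]

lemma le_cdf_quantile (hq : q ∈ Ioo 0 1) : q ≤ cdf μ (quantile μ q) := by
  have hne := nonempty_cdf_ge (μ := μ) hq.2
  have hbdd := bddBelow_cdf_ge (μ := μ) hq.1
  rw [quantile_eq_sInf_cdf]
  have hcont : ContinuousWithinAt (cdf μ) {x | q ≤ cdf μ x} (sInf {x | q ≤ cdf μ x}) :=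
    ((cdf μ).right_continuous _).mono fun x hx => csInf_le hbdd hx
  simpa [isClosed_Ici.closure_eq] using
    hcont.mem_closure (csInf_mem_closure hne hbdd) (t := Ici q) fun x hx => hx

lemma quantile_le_iff (hq : q ∈ Ioo 0 1) {x : ℝ} : quantile μ q ≤ x ↔ q ≤ cdf μ x := by
  refine ⟨fun h => (le_cdf_quantile hq).trans (monotone_cdf μ h), fun h => ?_⟩
  rw [quantile_eq_sInf_cdf]
  exact csInf_le (bddBelow_cdf_ge hq.1) h

lemma monotoneOn_quantile : MonotoneOn (quantile μ) (Ioo 0 1) := fun _ ha _ hb hab =>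
  (quantile_le_iff ha).mpr (hab.trans (le_cdf_quantile hb))

lemma aemeasurable_quantile : AEMeasurable (quantile μ) (volume.restrict (Ioo 0 1)) :=
  aemeasurable_restrict_of_monotoneOn measurableSet_Ioo monotoneOn_quantile

lemma map_quantile : (volume.restrict (Ioo 0 1)).map (quantile μ) = μ := by
  refine (Measure.ext_of_Iic μ _ fun x => ?_).symm
  have hpre : quantile μ ⁻¹' Iic x ∩ Ioo 0 1 = Ioc 0 (cdf μ x) ∩ Ioo 0 1 := by
    ext q
    simp only [mem_inter_iff, mem_preimage, mem_Iic, mem_Ioc, mem_Ioo]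
    constructor
    · rintro ⟨h, hq⟩; exact ⟨⟨hq.1, (quantile_le_iff hq).mp h⟩, hq⟩
    · rintro ⟨h, hq⟩; exact ⟨(quantile_le_iff hq).mpr h.2, hq⟩
  rw [Measure.map_apply_of_aemeasurable aemeasurable_quantile measurableSet_Iic,
    Measure.restrict_apply' measurableSet_Ioo, hpre, ← ofReal_cdf]
  refine le_antisymm ?_
    ((measure_mono inter_subset_left).trans_eq (by rw [Real.volume_Ioc, sub_zero]))
  calc ENNReal.ofReal (cdf μ x) = volume (Ioo 0 (cdf μ x)) := by
        rw [Real.volume_Ioo, sub_zero]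
    _ ≤ volume (Ioc 0 (cdf μ x) ∩ Ioo 0 1) := measure_mono fun q hq =>
        ⟨Ioo_subset_Ioc_self hq, hq.1, hq.2.trans_le (cdf_le_one μ x)⟩

lemma integral_comp_quantile {f : ℝ → ℝ} (hf : AEStronglyMeasurable f μ) :
    ∫ q in Ioo 0 1, f (quantile μ q) = ∫ x, f x ∂μ := by
  rw [← integral_map aemeasurable_quantile (by rwa [map_quantile]), map_quantile]

lemma integrableOn_comp_quantile {f : ℝ → ℝ} (hf : Integrable f μ) :
    IntegrableOn (fun q => f (quantile μ q)) (Ioo 0 1) := by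
  rw [← map_quantile (μ := μ)] at hf
  exact (integrable_map_measure hf.aestronglyMeasurable aemeasurable_quantile).mp hf

lemma mul_sub_quantile_le_integral_posPart (hp : p ∈ Ioo 0 1) (hμ : Integrable (fun x => x) μ)
    (t : ℝ) : (1 - p) * (quantile μ p - t) ≤ ∫ x, max (x - t) 0 ∂μ := by
  have hg : IntegrableOn (fun q => max (quantile μ q - t) 0) (Ioo 0 1) :=
    integrableOn_comp_quantile (hμ.sub (integrable_const t)).pos_part
  rw [← integral_comp_quantile (by fun_prop)]
  calc (1 - p) * (quantile μ p - t) = ∫ _ in Ioo p 1, (quantile μ p - t) := by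
        rw [setIntegral_const, measureReal_def, Real.volume_Ioo,
          ENNReal.toReal_ofReal (sub_nonneg.mpr hp.2.le), smul_eq_mul]
    _ ≤ ∫ q in Ioo p 1, max (quantile μ q - t) 0 :=
        setIntegral_mono_on (integrableOn_const measure_Ioo_lt_top.ne)
          (hg.mono_set (Ioo_subset_Ioo_left hp.1.le)) measurableSet_Ioo fun q hq =>
          le_max_of_le_left (sub_le_sub_right
            (monotoneOn_quantile hp ⟨hp.1.trans hq.1, hq.2⟩ hq.1.le) t)
    _ ≤ ∫ q in Ioo 0 1, max (quantile μ q - t) 0 :=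
        setIntegral_mono_set hg (ae_of_all _ fun _ => le_max_right _ _)
          (Ioo_subset_Ioo_left hp.1.le).eventuallyLE

lemma mul_quantile_add_integral_posPart (hp : p ∈ Ioo 0 1) (hμ : Integrable (fun x => x) μ) :
    (1 - p) * quantile μ p + ∫ x, max (x - quantile μ p) 0 ∂μ = ∫ q in p..1, quantile μ q := by
  set t := quantile μ p
  have hpos : EqOn (fun q => max (quantile μ q - t) 0) ((Ioi p).indicator (quantile μ · - t))
      (Ioo 0 1) := fun q hq => by
    rcases lt_or_ge p q with hpq | hqp
    · rw [indicator_of_mem (mem_Ioi.mpr hpq)]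
      exact max_eq_left (sub_nonneg.mpr (monotoneOn_quantile hp hq hpq.le))
    · rw [indicator_of_notMem (notMem_Ioi.mpr hqp)]
      exact max_eq_right (sub_nonpos.mpr (monotoneOn_quantile hq hp hqp))
  have hQ : IntegrableOn (quantile μ) (Ioo p 1) :=
    (integrableOn_comp_quantile hμ).mono_set (Ioo_subset_Ioo_left hp.1.le)
  rw [← integral_comp_quantile (by fun_prop), setIntegral_congr_fun measurableSet_Ioo hpos,
    setIntegral_indicator measurableSet_Ioi, Ioo_inter_Ioi, max_eq_right hp.1.le,
    integral_sub hQ (integrableOn_const measure_Ioo_lt_top.ne), setIntegral_const, measureReal_def,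
    Real.volume_Ioo, ENNReal.toReal_ofReal (sub_nonneg.mpr hp.2.le), smul_eq_mul,
    intervalIntegral.integral_of_le hp.2.le, integral_Ioc_eq_integral_Ioo]
  ring

end quantile

lemma max_sum_le_sum_max {ι M : Type*} [AddCommMonoid M] [LinearOrder M] [IsOrderedAddMonoid M]
    (s : Finset ι) (f : ι → M) : max (∑ i ∈ s, f i) 0 ≤ ∑ i ∈ s, max (f i) 0 :=
  max_le (Finset.sum_le_sum fun _ _ => le_max_left _ _)
    (Finset.sum_nonneg fun _ _ => le_max_right _ _)

lemma integral_posPart_sum_sub_le {ι Ω : Type*} [MeasurableSpace Ω] {P : Measure Ω}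
    [IsFiniteMeasure P]
    {s : Finset ι} {X : ι → Ω → ℝ} (hX : ∀ i ∈ s, Integrable (X i) P) (t : ι → ℝ) :
    ∫ ω, max (∑ i ∈ s, X i ω - ∑ i ∈ s, t i) 0 ∂P ≤ ∑ i ∈ s, ∫ ω, max (X i ω - t i) 0 ∂P := by
  have hpos : ∀ i ∈ s, Integrable (fun ω => max (X i ω - t i) 0) P :=
    fun i hi => ((hX i hi).sub (integrable_const _)).pos_part
  rw [← integral_finsetSum _ hpos]
  refine integral_mono ((integrable_finsetSum _ hX).sub (integrable_const _)).pos_part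
    (integrable_finsetSum _ hpos) fun ω => ?_
  simpa only [Finset.sum_sub_distrib] using max_sum_le_sum_max s fun i => X i ω - t i

theorem worst_case_var_bound
    (n : ℕ) (F : Fin n → Measure ℝ) [∀ i, IsProbabilityMeasure (F i)]
    (hint : ∀ i, Integrable (fun x => x) (F i))
    (p : ℝ) (hp : p ∈ Set.Ioo (0 : ℝ) 1)
    (Ω : Type*) [MeasurableSpace Ω] (P : Measure Ω) [IsProbabilityMeasure P]
    (X : Fin n → Ω → ℝ) (hmeas : ∀ i, Measurable (X i)) (hlaw : ∀ i, P.map (X i) = F i) :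
    sInf {x : ℝ | ENNReal.ofReal p ≤ P {ω | ∑ i, X i ω ≤ x}} ≤
      (1 - p)⁻¹ * ∑ i, ∫ q in p..1,
        sInf {x : ℝ | ENNReal.ofReal q ≤ F i (Set.Iic x)} := by
  set t := fun i => quantile (F i) p
  have hX : ∀ i, Integrable (X i) P := fun i =>
    (integrable_map_measure (g := fun x => x) (by fun_prop) (hmeas i).aemeasurable).mp
      (by simpa only [hlaw i] using hint i)
  have hS : Measurable fun ω => ∑ i, X i ω := Finset.measurable_sum _ fun i _ => hmeas i
  set ν := P.map fun ω => ∑ i, X i ω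
  have : IsProbabilityMeasure ν := Measure.isProbabilityMeasure_map hS.aemeasurable
  have hν : Integrable (fun x => x) ν :=
    (integrable_map_measure (g := fun x => x) (by fun_prop) hS.aemeasurable).mpr
      (integrable_finsetSum _ fun i _ => hX i)
  have hlhs : sInf {x : ℝ | ENNReal.ofReal p ≤ P {ω | ∑ i, X i ω ≤ x}} = quantile ν p := by
    simp only [quantile, ν, Measure.map_apply hS measurableSet_Iic]
    rfl
  rw [hlhs, le_inv_mul_iff₀ (sub_pos.mpr hp.2)]
  calc (1 - p) * quantile ν p
      ≤ (1 - p) * ∑ i, t i + ∫ y, max (y - ∑ i, t i) 0 ∂ν := by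
        linarith [mul_sub_quantile_le_integral_posPart hp hν (∑ i, t i)]
    _ = (1 - p) * ∑ i, t i + ∫ ω, max (∑ i, X i ω - ∑ i, t i) 0 ∂P := by
        rw [integral_map hS.aemeasurable (by fun_prop)]
    _ ≤ (1 - p) * ∑ i, t i + ∑ i, ∫ ω, max (X i ω - t i) 0 ∂P := by
        gcongr
        exact integral_posPart_sum_sub_le (fun i _ => hX i) t
    _ = ∑ i, ((1 - p) * t i + ∫ x, max (x - t i) 0 ∂(F i)) := by
        rw [Finset.mul_sum, ← Finset.sum_add_distrib]
        refine Finset.sum_congr rfl fun i _ => ?_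
        rw [← hlaw i, integral_map (hmeas i).aemeasurable (by fun_prop)]
    _ = ∑ i, ∫ q in p..1, quantile (F i) q :=
        Finset.sum_congr rfl fun i _ => mul_quantile_add_integral_posPart hp (hint i)
end
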